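/- Let G : (𝓐, A) → (𝓧, A′) be a surfunctor over 𝔾 such that (𝓐, A) is surcomplete and has K-equalizers, and such that G preserves surlimits and K-equalizers. Then for every object B of 𝓧, the comma category (B ↓ G) — with objects the pairs (a, b : B → G(a)) and morphisms f : (a, b) → (a′, b′) the morphisms f : a → a′ of 𝓐 with G(f) ∘ b = b′ — equipped with the arity functor to the coslice category A′(B)/𝔾 sending (a, b) to A′(b) and f to A(f), is a surcomplete surcategory with K-equalizers. -/

import Mathlib

open CategoryTheory CategoryTheory.Limits CategoryTheory.MonoidalCategory

universe w w' v u v₁ u₁ v₂ u₂ v₃ u₃ v₄ u₄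

namespace Sur

variable {G : Type u} [Category.{v} G]

section Basic

variable {E : Type u₁} [Category.{v₁} E]

/-- A diagram whose composite with the arity functor is constant at `B`. -/
structure ArityConst (A : E ⥤ G) {J : Type w} [Category.{w'} J] (F : J ⥤ E) (B : G) : Prop where
  obj_eq : ∀ j, A.obj (F.obj j) = B
  map_eq : ∀ {j j'} (f : j ⟶ j'),
    A.map (F.map f) = eqToHom ((obj_eq j).trans (obj_eq j').symm)

/-- A surcone on a diagram whose arity is constant at `B`: a cone together with an arity
morphism under which all legs lie. -/
structure Surcone (A : E ⥤ G) {J : Type w} [Category.{w'} J] (F : J ⥤ E) (B : G)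
    (h : ∀ j, A.obj (F.obj j) = B) where
  pt : E
  leg : ∀ j, pt ⟶ F.obj j
  w : ∀ {j j'} (f : j ⟶ j'), leg j ≫ F.map f = leg j'
  arity : A.obj pt ⟶ B
  fac : ∀ j, A.map (leg j) ≫ eqToHom (h j) = arity

/-- A surcone is a surlimit if its apex is in the fiber over `B`, its arity is the identity,
and every surcone factors through it by a unique morphism. -/
structure IsSurlimit (A : E ⥤ G) {J : Type w} [Category.{w'} J] {F : J ⥤ E} {B : G}
    {h : ∀ j, A.obj (F.obj j) = B} (c : Surcone A F B h) : Prop where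
  pt_eq : A.obj c.pt = B
  arity_eq : c.arity = eqToHom pt_eq
  lift : ∀ c' : Surcone A F B h, ∃! f : c'.pt ⟶ c.pt,
    (∀ j, f ≫ c.leg j = c'.leg j) ∧ A.map f ≫ eqToHom pt_eq = c'.arity

/-- `(E, A)` has `J`-surlimits. -/
def HasSurlimitsOfShape (A : E ⥤ G) (J : Type w) [Category.{w'} J] : Prop :=
  ∀ (F : J ⥤ E) (B : G) (hc : ArityConst A F B),
    ∃ c : Surcone A F B hc.obj_eq, IsSurlimit A c

/-- Dual notion : surcocone. -/
structure Surcocone (A : E ⥤ G) {J : Type w} [Category.{w'} J] (F : J ⥤ E) (B : G)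
    (h : ∀ j, A.obj (F.obj j) = B) where
  pt : E
  leg : ∀ j, F.obj j ⟶ pt
  w : ∀ {j j'} (f : j ⟶ j'), F.map f ≫ leg j' = leg j
  arity : B ⟶ A.obj pt
  fac : ∀ j, eqToHom (h j).symm ≫ A.map (leg j) = arity

structure IsSurcolimit (A : E ⥤ G) {J : Type w} [Category.{w'} J] {F : J ⥤ E} {B : G}
    {h : ∀ j, A.obj (F.obj j) = B} (c : Surcocone A F B h) : Prop where
  pt_eq : A.obj c.pt = B
  arity_eq : c.arity = eqToHom pt_eq.symm
  desc : ∀ c' : Surcocone A F B h, ∃! f : c.pt ⟶ c'.pt,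
    (∀ j, c.leg j ≫ f = c'.leg j) ∧ eqToHom pt_eq.symm ≫ A.map f = c'.arity

def HasSurcolimitsOfShape (A : E ⥤ G) (J : Type w) [Category.{w'} J] : Prop :=
  ∀ (F : J ⥤ E) (B : G) (hc : ArityConst A F B),
    ∃ c : Surcocone A F B hc.obj_eq, IsSurcolimit A c

/-- `(E, A)` has K-equalizers : every parallel pair with equal arity image has an equalizer
lying over an identity of the base. -/
def HasKEqualizers (A : E ⥤ G) : Prop :=
  ∀ ⦃a b : E⦄ (f g : a ⟶ b), A.map f = A.map g →
    ∃ (c : E) (e : c ⟶ a) (hc : A.obj c = A.obj a),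
      A.map e = eqToHom hc ∧ e ≫ f = e ≫ g ∧
      ∀ ⦃d : E⦄ (k : d ⟶ a), k ≫ f = k ≫ g → ∃! l : d ⟶ c, l ≫ e = k

/-- `e` is a surcoequalizer of the pair `(f, g)`. -/
def IsSurcoequalizer (A : E ⥤ G) {a b c : E} (f g : a ⟶ b) (e : b ⟶ c) : Prop :=
  ∃ h : A.obj b = A.obj c, A.map e = eqToHom h ∧ f ≫ e = g ≫ e ∧
    ∀ ⦃d : E⦄ (k : b ⟶ d), f ≫ k = g ≫ k → ∃! l : c ⟶ d, e ≫ l = k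

/-- `(E, A)` has surcoequalizers of all parallel pairs lying in one fiber. -/
def HasSurcoequalizers (A : E ⥤ G) : Prop :=
  ∀ ⦃a b : E⦄ (f g : a ⟶ b) (hab : A.obj a = A.obj b),
    A.map f = eqToHom hab → A.map g = eqToHom hab →
    ∃ (c : E) (e : b ⟶ c), IsSurcoequalizer A f g e

/-- `(E, A)` has surequalizers of all parallel pairs lying in one fiber. -/
def HasSurequalizers (A : E ⥤ G) : Prop :=
  ∀ ⦃a b : E⦄ (f g : a ⟶ b) (hab : A.obj a = A.obj b),
    A.map f = eqToHom hab → A.map g = eqToHom hab →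
    ∃ (c : E) (e : c ⟶ a) (hc : A.obj c = A.obj a),
      A.map e = eqToHom hc ∧ e ≫ f = e ≫ g ∧
      ∀ ⦃d : E⦄ (k : d ⟶ a), k ≫ f = k ≫ g → ∃! l : d ⟶ c, l ≫ e = k

/-- A split surfork : a split fork lying entirely in one fiber. -/
def IsSplitSurfork (A : E ⥤ G) {a b c : E} (f g : a ⟶ b) (h : b ⟶ c) : Prop :=
  (∃ hab : A.obj a = A.obj b, A.map f = eqToHom hab ∧ A.map g = eqToHom hab) ∧
  (∃ hbc : A.obj b = A.obj c, A.map h = eqToHom hbc) ∧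
  f ≫ h = g ≫ h ∧
  ∃ (s : c ⟶ b) (t : b ⟶ a),
    (∃ hcb : A.obj c = A.obj b, A.map s = eqToHom hcb) ∧
    (∃ hba : A.obj b = A.obj a, A.map t = eqToHom hba) ∧
    s ≫ h = 𝟙 c ∧ t ≫ f = 𝟙 b ∧ t ≫ g = h ≫ s

/-- A surinitial object in the fiber over `Gobj`. -/
def Surinitial (A : E ⥤ G) (Gobj : G) (x : E) : Prop :=
  ∃ hx : A.obj x = Gobj, ∀ (d : E) (h : Gobj ⟶ A.obj d),
    ∃! f : x ⟶ d, A.map f = eqToHom hx ≫ h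

/-- A surmonad : a monad whose underlying functor, unit and multiplication lie over
identities of the base. -/
structure IsSurmonad (A : E ⥤ G) (T : Monad E) : Prop where
  sur : T.toFunctor ⋙ A = A
  unit_arity : ∀ X : E, A.map (T.η.app X) = eqToHom (Functor.congr_obj sur X).symm
  mul_arity : ∀ X : E, A.map (T.μ.app X) = eqToHom (Functor.congr_obj sur (T.obj X))

end Basic

section Two

variable {E : Type u₁} [Category.{v₁} E] {E' : Type u₂} [Category.{v₂} E']

/-- An absolute surcoequalizer : a surcoequalizer preserved by every surfunctor. -/
def IsAbsoluteSurcoequalizer.{ua, va, ug, vg, ue, ve} {Gb : Type ug} [Category.{vg} Gb]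
    {Eb : Type ue} [Category.{ve} Eb] (A : Eb ⥤ Gb) {a b c : Eb}
    (f g : a ⟶ b) (e : b ⟶ c) : Prop :=
  IsSurcoequalizer A f g e ∧
  ∀ (D : Type ua) [Category.{va} D] (A' : D ⥤ Gb) (Fc : Eb ⥤ D),
    Fc ⋙ A' = A → IsSurcoequalizer A' (Fc.map f) (Fc.map g) (Fc.map e)

/-- The image of a surcone under a surfunctor. -/
def Surcone.map {A : E ⥤ G} {A' : E' ⥤ G} (Fc : E ⥤ E') (hsur : Fc ⋙ A' = A)
    {J : Type w} [Category.{w'} J] {D : J ⥤ E} {B : G} {h : ∀ j, A.obj (D.obj j) = B}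
    (c : Surcone A D B h) :
    Surcone A' (D ⋙ Fc) B (fun j => (Functor.congr_obj hsur (D.obj j)).trans (h j)) where
  pt := Fc.obj c.pt
  leg j := Fc.map (c.leg j)
  w {j j'} f := by
    dsimp only [Functor.comp_map]
    rw [← Fc.map_comp, c.w f]
  arity := eqToHom (Functor.congr_obj hsur c.pt) ≫ c.arity
  fac j := by
    have h1 := Functor.congr_hom hsur (c.leg j)
    dsimp only [Functor.comp_map] at h1
    rw [h1, Category.assoc, Category.assoc, eqToHom_trans, c.fac j]

/-- The image of a surcocone under a surfunctor. -/
def Surcocone.map {A : E ⥤ G} {A' : E' ⥤ G} (Fc : E ⥤ E') (hsur : Fc ⋙ A' = A)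
    {J : Type w} [Category.{w'} J] {D : J ⥤ E} {B : G} {h : ∀ j, A.obj (D.obj j) = B}
    (c : Surcocone A D B h) :
    Surcocone A' (D ⋙ Fc) B (fun j => (Functor.congr_obj hsur (D.obj j)).trans (h j)) where
  pt := Fc.obj c.pt
  leg j := Fc.map (c.leg j)
  w {j j'} f := by
    dsimp only [Functor.comp_map]
    rw [← Fc.map_comp, c.w f]
  arity := c.arity ≫ eqToHom (Functor.congr_obj hsur c.pt).symm
  fac j := by
    have h1 := Functor.congr_hom hsur (c.leg j)
    dsimp only [Functor.comp_map] at h1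
    rw [h1, eqToHom_trans_assoc, ← Category.assoc, c.fac j]

/-- A surfunctor preserves `J`-surlimits. -/
def PreservesSurlimitsOfShape {A : E ⥤ G} {A' : E' ⥤ G} (Fc : E ⥤ E') (hsur : Fc ⋙ A' = A)
    (J : Type w) [Category.{w'} J] : Prop :=
  ∀ (D : J ⥤ E) (B : G) (hc : ArityConst A D B) (c : Surcone A D B hc.obj_eq),
    IsSurlimit A c → IsSurlimit A' (c.map Fc hsur)

/-- A surfunctor preserves `J`-surcolimits. -/
def PreservesSurcolimitsOfShape {A : E ⥤ G} {A' : E' ⥤ G} (Fc : E ⥤ E') (hsur : Fc ⋙ A' = A)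
    (J : Type w) [Category.{w'} J] : Prop :=
  ∀ (D : J ⥤ E) (B : G) (hc : ArityConst A D B) (c : Surcocone A D B hc.obj_eq),
    IsSurcolimit A c → IsSurcolimit A' (c.map Fc hsur)

/-- A surfunctor preserves K-equalizers. -/
def PreservesKEqualizers {A : E ⥤ G} {A' : E' ⥤ G} (Fc : E ⥤ E')
    (_hsur : Fc ⋙ A' = A) : Prop :=
  ∀ ⦃a b c : E⦄ (f g : a ⟶ b) (e : c ⟶ a) (hc : A.obj c = A.obj a),
    A.map f = A.map g → A.map e = eqToHom hc → e ≫ f = e ≫ g →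
    (∀ ⦃d : E⦄ (k : d ⟶ a), k ≫ f = k ≫ g → ∃! l : d ⟶ c, l ≫ e = k) →
    (Fc.map e ≫ Fc.map f = Fc.map e ≫ Fc.map g ∧
     ∀ ⦃d : E'⦄ (k : d ⟶ Fc.obj a), k ≫ Fc.map f = k ≫ Fc.map g →
       ∃! l : d ⟶ Fc.obj c, l ≫ Fc.map e = k)

/-- A suradjunction : an adjunction between surfunctors whose unit and counit lie over
identities of the base. -/
structure IsSuradjunction (A' : E' ⥤ G) (A : E ⥤ G) (Fl : E' ⥤ E) (Fr : E ⥤ E')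
    (adj : Fl ⊣ Fr) : Prop where
  left_sur : Fl ⋙ A = A'
  right_sur : Fr ⋙ A' = A
  unit_arity : ∀ X : E', A'.map (adj.unit.app X) =
    eqToHom (((Functor.congr_obj right_sur (Fl.obj X)).trans (Functor.congr_obj left_sur X)).symm)
  counit_arity : ∀ Y : E, A.map (adj.counit.app Y) =
    eqToHom ((Functor.congr_obj left_sur (Fr.obj Y)).trans (Functor.congr_obj right_sur Y))

/-- `U` creates surcoequalizers of the parallel pair `(f, g)`. -/
def CreatesSurcoequalizersOf (A : E ⥤ G) (A' : E' ⥤ G) (U : E ⥤ E')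
    {a b : E} (f g : a ⟶ b) : Prop :=
  ∀ (c : E') (e : U.obj b ⟶ c), IsSurcoequalizer A' (U.map f) (U.map g) e →
    ∃ (z : E) (q : b ⟶ z) (hz : U.obj z = c),
      U.map q = e ≫ eqToHom hz.symm ∧ IsSurcoequalizer A f g q ∧
      ∀ (z' : E) (q' : b ⟶ z') (hz' : U.obj z' = c),
        U.map q' = e ≫ eqToHom hz'.symm →
        ∃ hzz : z = z', q' = q ≫ eqToHom hzz

/-- The solution set condition for an object `B` relative to a surfunctor `Fc`. -/
def SolutionSet (A' : E' ⥤ G) (Fc : E ⥤ E') (B : E') : Prop :=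
  ∃ (I : Type w) (obj : I → E) (bi : ∀ i, B ⟶ Fc.obj (obj i))
    (hι : ∀ i, A'.obj B = A'.obj (Fc.obj (obj i))),
    (∀ i, A'.map (bi i) = eqToHom (hι i)) ∧
    ∀ (a : E) (b : B ⟶ Fc.obj a), ∃ (i : I) (x : obj i ⟶ a), bi i ≫ Fc.map x = b

/-- A fusionnable suradjunction (condition on the right adjoint surfunctor `U`). -/
def Fusionnable {Ac : E ⥤ G} {Ab : E' ⥤ G} (U : E ⥤ E') (hU : U ⋙ Ab = Ac) : Prop :=
  HasSurcoequalizers Ac ∧ HasSurcolimitsOfShape Ac ℕ ∧ HasSurcolimitsOfShape Ab ℕ ∧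
  U.Faithful ∧ PreservesSurcolimitsOfShape U hU ℕ

/-- A `κ`-filtered category : every diagram of size `< κ` admits a cocone. -/
def IsCardinalFilteredCat (J : Type w) [Category.{w} J] (κ : Cardinal.{w}) : Prop :=
  ∀ (K : Type w) [SmallCategory K], Cardinal.mk K < κ →
    Cardinal.mk ((k : K) × (k' : K) × (k ⟶ k')) < κ →
    ∀ D : K ⥤ J, ∃ (j : J) (cc : ∀ k, D.obj k ⟶ j),
      ∀ {k k'} (f : k ⟶ k'), D.map f ≫ cc k' = cc k

end Two

section Pullback

variable {E : Type u₁} [Category.{v₁} E] {E' : Type u₂} [Category.{v₂} E']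
  {Bc : Type u₃} [Category.{v₃} Bc]

/-- The strict pullback of two functors `U : E ⥤ Bc` and `V : E' ⥤ Bc`. -/
structure CatPullback (U : E ⥤ Bc) (V : E' ⥤ Bc) where
  left : E
  right : E'
  eq : U.obj left = V.obj right

@[ext]
structure CatPullbackHom (U : E ⥤ Bc) (V : E' ⥤ Bc) (X Y : CatPullback U V) where
  left : X.left ⟶ Y.left
  right : X.right ⟶ Y.right
  w : U.map left = eqToHom X.eq ≫ V.map right ≫ eqToHom Y.eq.symm

instance (U : E ⥤ Bc) (V : E' ⥤ Bc) : Category (CatPullback U V) where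
  Hom X Y := CatPullbackHom U V X Y
  id X := ⟨𝟙 _, 𝟙 _, by simp⟩
  comp f g := ⟨f.left ≫ g.left, f.right ≫ g.right, by simp [f.w, g.w]⟩
  id_comp f := by apply CatPullbackHom.ext <;> simp [CategoryStruct.comp, CategoryStruct.id]
  comp_id f := by apply CatPullbackHom.ext <;> simp [CategoryStruct.comp, CategoryStruct.id]
  assoc f g h := by apply CatPullbackHom.ext <;> simp [CategoryStruct.comp]

/-- The canonical functor from the strict pullback of `U` and `V` to their common codomain. -/
def Ofun (U : E ⥤ Bc) (V : E' ⥤ Bc) : CatPullback U V ⥤ Bc where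
  obj X := U.obj X.left
  map f := U.map f.left
  map_id X := by
    show U.map (𝟙 X.left) = _
    simp
  map_comp f g := by
    show U.map (_ ≫ _) = _
    simp

/-- The arity functor on the comma category `B ↓ Fc` of a surfunctor `Fc`. -/
def commaArity {A : E ⥤ G} {A' : E' ⥤ G} (Fc : E ⥤ E') (hsur : Fc ⋙ A' = A) (B : E') :
    StructuredArrow B Fc ⥤ Under (A'.obj B) where
  obj p := Under.mk (A'.map p.hom ≫ eqToHom (Functor.congr_obj hsur p.right))
  map {p q} f := Under.homMk (A.map f.right) (by
    have hw : p.hom ≫ Fc.map f.right = q.hom := StructuredArrow.w f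
    have h1 := Functor.congr_hom hsur f.right
    dsimp only [Functor.comp_map] at h1
    dsimp [Under.mk]
    have h2 : eqToHom (Functor.congr_obj hsur p.right) ≫ A.map f.right
        = A'.map (Fc.map f.right) ≫ eqToHom (Functor.congr_obj hsur q.right) := by
      rw [h1]; simp
    rw [Category.assoc, h2, ← Category.assoc, ← A'.map_comp, hw])

end Pullback

universe s

/-! Both constructions in `B ↓ G` are computed on underlying objects of `𝓐`. A surlimit is the
surlimit `c` of the projected diagram, with structure arrow `B ⟶ G c` obtained by factoring the
diagram's structure arrows through `G c`, which is again a surlimit since `G` preserves it. A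
K-equalizer is the K-equalizer `e` in `𝓐`, with structure arrow the factorization of the source's
structure arrow through the equalizer `G e`. -/

section Comma

lemma under_eq_iff {T : Type u₃} [Category.{v₃} T] {X : T} {U V : Under X}
    (hr : U.right = V.right) : U = V ↔ U.hom ≫ eqToHom hr = V.hom := by
  refine ⟨fun h => by subst h; simp, fun hh => ?_⟩
  obtain ⟨⟨⟨⟩⟩, r, _⟩ := U
  obtain ⟨⟨⟨⟩⟩, r', _⟩ := V
  change r = r' at hr
  subst hr
  simp only [eqToHom_refl, Category.comp_id] at hh
  subst hh
  rfl

lemma under_eq_of_right_eq_eqToHom {T : Type u₃} [Category.{v₃} T] {X : T} {U V : Under X}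
    (φ : U ⟶ V) (hr : U.right = V.right) (hφ : φ.right = eqToHom hr) : U = V :=
  (under_eq_iff hr).2 (hφ ▸ Under.w φ)

variable {E : Type u₁} [Category.{v₁} E] {E' : Type u₂} [Category.{v₂} E']
  {A : E ⥤ G} {A' : E' ⥤ G} {F : E ⥤ E'}

lemma IsSurlimit.hom_ext {J : Type w} [Category.{w'} J] {D : J ⥤ E} {B : G}
    {h : ∀ j, A.obj (D.obj j) = B} {c : Surcone A D B h} (hc : IsSurlimit A c) {x : E}
    {f₁ f₂ : x ⟶ c.pt} (hleg : ∀ j, f₁ ≫ c.leg j = f₂ ≫ c.leg j)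
    (harity : A.map f₁ ≫ eqToHom hc.pt_eq = A.map f₂ ≫ eqToHom hc.pt_eq) : f₁ = f₂ := by
  let s : Surcone A D B h :=
    { pt := x
      leg := fun j => f₁ ≫ c.leg j
      w := fun f => by rw [Category.assoc, c.w f]
      arity := A.map f₁ ≫ eqToHom hc.pt_eq
      fac := fun j => by rw [A.map_comp, Category.assoc, c.fac j, hc.arity_eq] }
  exact (hc.lift s).unique ⟨fun _ => rfl, rfl⟩ ⟨fun j => (hleg j).symm, harity.symm⟩

variable (hF : F ⋙ A' = A) (B : E')

lemma map_map_eq_of_comp_eq {x y : E} (f : x ⟶ y) :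
    A'.map (F.map f) = eqToHom (Functor.congr_obj hF x) ≫ A.map f ≫
      eqToHom (Functor.congr_obj hF y).symm :=
  Functor.congr_hom hF f

@[simp]
lemma commaArity_map_right {p q : StructuredArrow B F} (f : p ⟶ q) :
    ((commaArity F hF B).map f).right = A.map f.right :=
  rfl

lemma commaArity_obj_eq_iff {p : StructuredArrow B F} {U : Under (A'.obj B)}
    (hr : A.obj p.right = U.right) :
    (commaArity F hF B).obj p = U ↔
      A'.map p.hom ≫ eqToHom ((Functor.congr_obj hF p.right).trans hr) = U.hom := by
  rw [under_eq_iff hr]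
  simp [commaArity]

section Surlimit

variable {J : Type w} [Category.{w'} J] {D : J ⥤ StructuredArrow B F} {U : Under (A'.obj B)}

lemma ArityConst.proj (hD : ArityConst (commaArity F hF B) D U) :
    ArityConst A (D ⋙ StructuredArrow.proj B F) U.right where
  obj_eq j := congrArg Comma.right (hD.obj_eq j)
  map_eq f := by
    have h := congrArg Under.Hom.right (hD.map_eq f)
    rwa [commaArity_map_right, Under.eqToHom_right] at h

-- reducible, so that `rw` identifies `(s.proj hF B).pt` with `s.pt.right`
abbrev Surcone.proj {h : ∀ j, (commaArity F hF B).obj (D.obj j) = U}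
    (s : Surcone (commaArity F hF B) D U h) :
    Surcone A (D ⋙ StructuredArrow.proj B F) U.right (fun j => congrArg Comma.right (h j)) where
  pt := s.pt.right
  leg j := (s.leg j).right
  w f := congrArg CommaMorphism.right (s.w f)
  arity := s.arity.right
  fac j := by
    have h := congrArg Under.Hom.right (s.fac j)
    rwa [Under.comp_right, commaArity_map_right, Under.eqToHom_right] at h

def ArityConst.structureSurcone (hD : ArityConst (commaArity F hF B) D U) :
    Surcone A' ((D ⋙ StructuredArrow.proj B F) ⋙ F) U.right
      (fun j => (Functor.congr_obj hF _).trans ((hD.proj hF B).obj_eq j)) where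
  pt := B
  leg j := (D.obj j).hom
  w f := StructuredArrow.w (D.map f)
  arity := U.hom
  fac j := (commaArity_obj_eq_iff hF B ((hD.proj hF B).obj_eq j)).1 (hD.obj_eq j)

variable (hD : ArityConst (commaArity F hF B) D U)
  {c : Surcone A (D ⋙ StructuredArrow.proj B F) U.right (hD.proj hF B).obj_eq}

def commaSurcone (hc : IsSurlimit A c) (β : B ⟶ F.obj c.pt)
    (hβ : ∀ j, β ≫ F.map (c.leg j) = (D.obj j).hom)
    (hβA : A'.map β ≫ eqToHom ((Functor.congr_obj hF c.pt).trans hc.pt_eq) = U.hom) :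
    Surcone (commaArity F hF B) D U hD.obj_eq where
  pt := StructuredArrow.mk β
  leg j := StructuredArrow.homMk (c.leg j) (hβ j)
  w f := StructuredArrow.hom_ext _ _ (c.w f)
  arity := eqToHom ((commaArity_obj_eq_iff hF B hc.pt_eq).2 hβA)
  fac j := by
    ext
    rw [Under.comp_right, Under.eqToHom_right, Under.eqToHom_right]
    exact (c.fac j).trans hc.arity_eq

lemma isSurlimit_commaSurcone (hc : IsSurlimit A c) (hc' : IsSurlimit A' (c.map F hF))
    (β : B ⟶ F.obj c.pt) (hβ : ∀ j, β ≫ F.map (c.leg j) = (D.obj j).hom)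
    (hβA : A'.map β ≫ eqToHom ((Functor.congr_obj hF c.pt).trans hc.pt_eq) = U.hom) :
    IsSurlimit (commaArity F hF B) (commaSurcone hF B hD hc β hβ hβA) where
  pt_eq := (commaArity_obj_eq_iff hF B hc.pt_eq).2 hβA
  arity_eq := rfl
  lift s := by
    obtain ⟨f, ⟨hfleg, hfA⟩, hfu⟩ := hc.lift (s.proj hF B)
    have hcomm : s.pt.hom ≫ F.map f = β := by
      refine hc'.hom_ext (fun j => ?_) ?_
      · change (s.pt.hom ≫ F.map f) ≫ F.map (c.leg j) = β ≫ F.map (c.leg j)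
        rw [hβ, Category.assoc, ← F.map_comp, hfleg j]
        exact StructuredArrow.w (s.leg j)
      · calc A'.map (s.pt.hom ≫ F.map f) ≫ eqToHom ((Functor.congr_obj hF c.pt).trans hc.pt_eq)
            = A'.map s.pt.hom ≫ eqToHom (Functor.congr_obj hF s.pt.right) ≫
                A.map f ≫ eqToHom hc.pt_eq := by
              rw [A'.map_comp, map_map_eq_of_comp_eq hF]
              simp
          _ = U.hom := by rw [hfA, ← Category.assoc]; exact Under.w s.arity
          _ = A'.map β ≫ eqToHom ((Functor.congr_obj hF c.pt).trans hc.pt_eq) := hβA.symm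
    refine ⟨StructuredArrow.homMk f hcomm, ⟨fun j => StructuredArrow.hom_ext _ _ (hfleg j), ?_⟩,
      fun y hy => StructuredArrow.hom_ext _ _ (hfu y.right ⟨fun j => ?_, ?_⟩)⟩
    · ext
      rw [Under.comp_right, commaArity_map_right, Under.eqToHom_right]
      exact hfA
    · exact congrArg CommaMorphism.right (hy.1 j)
    · have h := congrArg Under.Hom.right hy.2
      rwa [Under.comp_right, commaArity_map_right, Under.eqToHom_right] at h

end Surlimit

theorem hasSurlimitsOfShape_commaArity {J : Type w} [Category.{w'} J]
    (hJ : HasSurlimitsOfShape A J) (hpJ : PreservesSurlimitsOfShape F hF J) :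
    HasSurlimitsOfShape (commaArity F hF B) J := by
  intro D U hD
  obtain ⟨c, hc⟩ := hJ _ U.right (hD.proj hF B)
  have hc' := hpJ _ _ (hD.proj hF B) c hc
  obtain ⟨β, ⟨hβ, hβA⟩, -⟩ := hc'.lift (hD.structureSurcone hF B)
  exact ⟨_, isSurlimit_commaSurcone hF B hD hc hc' β hβ hβA⟩

theorem hasKEqualizers_commaArity (hK : HasKEqualizers A) (hpK : PreservesKEqualizers F hF) :
    HasKEqualizers (commaArity F hF B) := by
  intro X Y f g hfg
  have hr : A.map f.right = A.map g.right := congrArg Under.Hom.right hfg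
  obtain ⟨c, e, hcA, heA, hef, he⟩ := hK f.right g.right hr
  obtain ⟨-, hFe⟩ := hpK f.right g.right e hcA hr heA hef he
  obtain ⟨k, hk, hku⟩ := hFe X.hom (by rw [StructuredArrow.w f, StructuredArrow.w g])
  let e' : StructuredArrow.mk k ⟶ X := StructuredArrow.homMk e hk
  have hobj := under_eq_of_right_eq_eqToHom ((commaArity F hF B).map e') hcA heA
  refine ⟨_, e', hobj, ?_, StructuredArrow.hom_ext _ _ hef, fun d K hKfg => ?_⟩
  · ext
    rw [commaArity_map_right, Under.eqToHom_right]
    exact heA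
  · obtain ⟨l, hl, hlu⟩ := he K.right (congrArg CommaMorphism.right hKfg)
    have hlk : d.hom ≫ F.map l = k := by
      refine hku _ ?_
      change (d.hom ≫ F.map l) ≫ F.map e = X.hom
      rw [Category.assoc, ← F.map_comp, hl]
      exact StructuredArrow.w K
    exact ⟨StructuredArrow.homMk l hlk, StructuredArrow.hom_ext _ _ hl,
      fun y hy => StructuredArrow.hom_ext _ _ (hlu y.right (congrArg CommaMorphism.right hy))⟩

end Comma

/-- The comma surcategory of a surlimit- and K-equalizer-preserving surfunctor out of a
surcomplete surcategory with K-equalizers is surcomplete with K-equalizers (Proposition 8). -/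
theorem comma_surcategory_surcomplete
    {G : Type u} [Category.{v} G]
    {Ac : Type u₁} [Category.{v₁} Ac] {Bc : Type u₂} [Category.{v₂} Bc]
    (A : Ac ⥤ G) (A' : Bc ⥤ G) (Gf : Ac ⥤ Bc) (hsur : Gf ⋙ A' = A)
    (hcompl : ∀ (J : Type s) [SmallCategory J], HasSurlimitsOfShape A J)
    (hK : HasKEqualizers A)
    (hpres : ∀ (J : Type s) [SmallCategory J], PreservesSurlimitsOfShape Gf hsur J)
    (hpresK : PreservesKEqualizers Gf hsur)
    (B : Bc) :
    (∀ (J : Type s) [SmallCategory J],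
        HasSurlimitsOfShape (commaArity Gf hsur B) J) ∧
    HasKEqualizers (commaArity Gf hsur B) :=
  ⟨fun J _ => hasSurlimitsOfShape_commaArity hsur B (hcompl J) (hpres J),
    hasKEqualizers_commaArity hsur B hK hpresK⟩

end Sur
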